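/- arXiv:2212.00866 — 2 statements merged into one kernel-verified Lean document; each statement's English description precedes it below -/
import Mathlib

section
/- Let A ∈ ℝ^{n×n}, G ∈ ℝ^{n×m}, C ∈ ℝ^{m×n} and suppose A − G C is such that ‖exp(t(A−GC))‖ ≤ M exp(−α t) for all t ≥ 0 with M ≥ 1, α > 0. Let g : ℝⁿ → ℝⁿ and ĝ : ℝⁿ → ℝⁿ satisfy ‖ĝ(u) − g(v)‖ ≤ L‖u − v‖ + ε for all u, v, with M·L < α. If x solves ẋ = A x + g(x), y = C x, and x̂ solves x̂' = A x̂ + ĝ(x̂) + G(y − C x̂), then for all t ≥ 0, ‖x̂(t) − x(t)‖ ≤ M·exp((ML − α)t)·‖x̂(0) − x(0)‖ + Mε/(α − ML). -/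
open NormedSpace

/-!
The error `e = x̂ - x` solves `e' = (A - GC) e + (ĝ x̂ - g x)`, with a forcing term of norm at
most `L ‖e‖ + ε`. Variation of constants together with `‖exp (t (A - GC))‖ ≤ M e^{-αt}` gives
`‖e t‖ ≤ ψ t`, where `ψ t = e^{-αt} (M ‖e 0‖ + ∫₀ᵗ e^{αs} M (L ‖e s‖ + ε) ds)`. Since
`ψ' = -αψ + M (L ‖e‖ + ε) ≤ (ML - α) ψ + Mε`, Grönwall's inequality bounds `ψ`, and `ML < α`
turns the forcing into the stationary offset `Mε / (α - ML)`.
-/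

section Matrix

variable {𝕜 n m : Type*} [RCLike 𝕜] [Fintype n] [DecidableEq n]

open scoped Matrix.Norms.L2Operator in
theorem Matrix.toEuclideanCLM_exp (X : Matrix n n 𝕜) :
    toEuclideanCLM (𝕜 := 𝕜) (exp X) = exp (toEuclideanCLM (𝕜 := 𝕜) X) :=
  map_exp_of_mem_ball (𝕂 := 𝕜) _
    (AddMonoidHomClass.isometry_of_norm _ l2_opNorm_toEuclideanCLM).continuous X
    ((expSeries_radius_eq_top 𝕜 (Matrix n n 𝕜)).symm ▸ edist_lt_top _ _)

theorem Matrix.toEuclideanCLM_sub_mul_apply [Fintype m] [DecidableEq m] (A : Matrix n n 𝕜)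
    (G : Matrix n m 𝕜) (C : Matrix m n 𝕜) (v : EuclideanSpace 𝕜 n) :
    toEuclideanCLM (𝕜 := 𝕜) (A - G * C) v =
      toEuclideanLin A v - toEuclideanLin G (toEuclideanLin C v) := by
  ext i
  simp [Matrix.mulVec_mulVec]

end Matrix

/-- The solution of `ψ' = -α ψ + φ`, `ψ 0 = c`. -/
noncomputable def dampedDuhamel (α c : ℝ) (φ : ℝ → ℝ) (t : ℝ) : ℝ :=
  Real.exp (-α * t) * (c + ∫ s in (0 : ℝ)..t, Real.exp (α * s) * φ s)

section DampedDuhamel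

variable {α c : ℝ} {φ : ℝ → ℝ}

@[simp]
theorem dampedDuhamel_zero : dampedDuhamel α c φ 0 = c := by
  simp [dampedDuhamel]

theorem hasDerivAt_dampedDuhamel (hφ : Continuous φ) (t : ℝ) :
    HasDerivAt (dampedDuhamel α c φ) (-α * dampedDuhamel α c φ t + φ t) t := by
  have hdecay : HasDerivAt (fun t => Real.exp (-α * t)) (Real.exp (-α * t) * (-α * 1)) t :=
    ((hasDerivAt_id t).const_mul (-α)).exp
  have hintegral := ((by fun_prop : Continuous fun s => Real.exp (α * s) * φ s)
    |>.integral_hasStrictDerivAt 0 t).hasDerivAt.const_add c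
  refine (hdecay.mul hintegral).congr_deriv ?_
  rw [dampedDuhamel, neg_mul, Real.exp_neg]
  field_simp

theorem le_gronwallBound_of_le_dampedDuhamel {v : ℝ → ℝ} {K b : ℝ} (hφ : Continuous φ)
    (hK : 0 ≤ K) (hφv : ∀ s, 0 ≤ s → φ s ≤ K * v s + b)
    (hv : ∀ t, 0 ≤ t → v t ≤ dampedDuhamel α c φ t) {t : ℝ} (ht : 0 ≤ t) :
    v t ≤ gronwallBound c (K - α) b t := by
  have hψ := hasDerivAt_dampedDuhamel (α := α) (c := c) hφ
  have hgronwall := le_gronwallBound_of_liminf_deriv_right_le (b := t) (ε := b) (K := K - α)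
    (continuous_iff_continuousAt.2 fun s => (hψ s).continuousAt).continuousOn
    (fun s _ r hr => (hψ s).hasDerivWithinAt.liminf_right_slope_le hr) dampedDuhamel_zero.le
    (fun s hs => by nlinarith [hφv s hs.1, hv s hs.1]) t ⟨ht, le_rfl⟩
  rw [sub_zero] at hgronwall
  exact (hv t ht).trans hgronwall

end DampedDuhamel

theorem gronwallBound_le_of_neg {δ K ε : ℝ} (hK : K < 0) (hε : 0 ≤ ε) (t : ℝ) :
    gronwallBound δ K ε t ≤ δ * Real.exp (K * t) + ε / -K := by
  have hoffset : 0 ≤ ε / -K * Real.exp (K * t) := by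
    have := div_nonneg hε (neg_nonneg.2 hK.le)
    positivity
  have hforcing : ε / K * (Real.exp (K * t) - 1) = ε / -K - ε / -K * Real.exp (K * t) := by
    rw [div_neg]
    ring
  rw [gronwallBound_of_K_ne_0 hK.ne]
  dsimp only
  rw [hforcing]
  linarith

section VariationOfConstants

variable {E : Type*} [NormedAddCommGroup E] [NormedSpace ℝ E] [CompleteSpace E]
  {B : E →L[ℝ] E} {e h : ℝ → E}

theorem hasDerivAt_exp_smul_sub_apply {s : ℝ} (he : HasDerivAt e (B (e s) + h s) s) (τ : ℝ) :
    HasDerivAt (fun r => exp ((τ - r) • B) (e r)) (exp ((τ - s) • B) (h s)) s := by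
  have hexp : HasDerivAt (fun r : ℝ => exp ((τ - r) • B)) (-(exp ((τ - s) • B) * B)) s := by
    have := (hasDerivAt_exp_smul_const B (τ - s)).scomp s ((hasDerivAt_id s).const_sub τ)
    simp only [Function.comp_def] at this
    simpa using this
  refine (hexp.clm_apply he).congr_deriv ?_
  simp only [neg_apply, mul_apply_eq_comp, map_add]
  abel

theorem norm_le_dampedDuhamel_of_hasDerivAt {M α : ℝ} {φ : ℝ → ℝ}
    (hB : ∀ t, 0 ≤ t → ‖exp (t • B)‖ ≤ M * Real.exp (-α * t))
    (he : ∀ s, HasDerivAt e (B (e s) + h s) s) (hφ : Continuous φ) (hh : ∀ s, ‖h s‖ ≤ φ s)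
    {τ : ℝ} (hτ : 0 ≤ τ) :
    ‖e τ‖ ≤ dampedDuhamel α (M * ‖e 0‖) (fun s => M * φ s) τ := by
  set F : ℝ → E := fun r => exp ((τ - r) • B) (e r)
  have hF : ∀ s, HasDerivAt F (exp ((τ - s) • B) (h s)) s :=
    fun s => hasDerivAt_exp_smul_sub_apply (he s) τ
  set bound : ℝ → ℝ :=
    fun s => Real.exp (-α * τ) * ∫ r in (0 : ℝ)..s, Real.exp (α * r) * (M * φ r)
  have hbound : ∀ s,
      HasDerivAt bound (Real.exp (-α * τ) * (Real.exp (α * s) * (M * φ s))) s :=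
    fun s => ((by fun_prop : Continuous fun r => Real.exp (α * r) * (M * φ r))
      |>.integral_hasStrictDerivAt 0 s).hasDerivAt.const_mul _
  have hduhamel : ‖F τ - F 0‖ ≤ bound τ := by
    refine image_norm_le_of_norm_deriv_right_le_deriv_boundary (f := fun r => F r - F 0)
      (continuous_iff_continuousAt.2 fun s => ((hF s).sub_const _).continuousAt).continuousOn
      (fun s _ => ((hF s).sub_const _).hasDerivWithinAt) (by simp [bound]) hbound
      (fun s hs => ?_) ⟨hτ, le_rfl⟩
    have hsemigroup := hB (τ - s) (sub_nonneg.2 hs.2.le)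
    calc ‖exp ((τ - s) • B) (h s)‖ ≤ ‖exp ((τ - s) • B)‖ * ‖h s‖ := by
          apply ContinuousLinearMap.le_opNorm
      _ ≤ M * Real.exp (-α * (τ - s)) * φ s :=
          mul_le_mul hsemigroup (hh s) (norm_nonneg _) ((norm_nonneg _).trans hsemigroup)
      _ = Real.exp (-α * τ) * (Real.exp (α * s) * (M * φ s)) := by
          rw [show -α * (τ - s) = -α * τ + α * s by ring, Real.exp_add]
          ring
  have hFτ : F τ = e τ := by simp [F]
  have hF0 : F 0 = exp (τ • B) (e 0) := by simp [F]
  calc ‖e τ‖ ≤ ‖exp (τ • B) (e 0)‖ + ‖F τ - F 0‖ := by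
        rw [hFτ, hF0]
        exact norm_le_insert' _ _
    _ ≤ M * Real.exp (-α * τ) * ‖e 0‖ + bound τ := by
        gcongr
        exact (ContinuousLinearMap.le_opNorm _ _).trans
          (mul_le_mul_of_nonneg_right (hB τ hτ) (norm_nonneg _))
    _ = dampedDuhamel α (M * ‖e 0‖) (fun s => M * φ s) τ := by
        simp only [bound, dampedDuhamel]
        ring

end VariationOfConstants

theorem luenberger_like_observer_bound_general
    (n m : ℕ)
    (A : Matrix (Fin n) (Fin n) ℝ) (G : Matrix (Fin n) (Fin m) ℝ)
    (C : Matrix (Fin m) (Fin n) ℝ)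
    (M α : ℝ) (hM : 1 ≤ M)
    (hexp : ∀ t : ℝ, 0 ≤ t →
      ‖(Matrix.toEuclideanLin (NormedSpace.exp (t • (A - G * C)))).toContinuousLinearMap‖
        ≤ M * Real.exp (-α * t))
    (g ghat : EuclideanSpace ℝ (Fin n) → EuclideanSpace ℝ (Fin n))
    (L ε : ℝ) (hL : 0 ≤ L) (hε : 0 ≤ ε) (hMLα : M * L < α)
    (hg : ∀ u v, ‖ghat u - g v‖ ≤ L * ‖u - v‖ + ε)
    (x xhat : ℝ → EuclideanSpace ℝ (Fin n))
    (hx : ∀ t, HasDerivAt x (Matrix.toEuclideanLin A (x t) + g (x t)) t)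
    (hxhat : ∀ t, HasDerivAt xhat
      (Matrix.toEuclideanLin A (xhat t) + ghat (xhat t)
        + Matrix.toEuclideanLin G
            (Matrix.toEuclideanLin C (x t) - Matrix.toEuclideanLin C (xhat t))) t) :
    ∀ t : ℝ, 0 ≤ t →
      ‖xhat t - x t‖ ≤ M * Real.exp ((M * L - α) * t) * ‖xhat 0 - x 0‖
        + M * ε / (α - M * L) := by
  set B := Matrix.toEuclideanCLM (𝕜 := ℝ) (A - G * C)
  have hB : ∀ t, 0 ≤ t → ‖exp (t • B)‖ ≤ M * Real.exp (-α * t) := fun t ht => by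
    have := hexp t ht
    change ‖Matrix.toEuclideanCLM (𝕜 := ℝ) (exp (t • (A - G * C)))‖ ≤ _ at this
    rwa [Matrix.toEuclideanCLM_exp, map_smul] at this
  have he : ∀ s, HasDerivAt (fun s => xhat s - x s)
      (B (xhat s - x s) + (ghat (xhat s) - g (x s))) s := fun s =>
    ((hxhat s).sub (hx s)).congr_deriv (by
      rw [Matrix.toEuclideanCLM_sub_mul_apply]
      simp only [map_sub]
      abel)
  have hcont : Continuous fun s => xhat s - x s :=
    continuous_iff_continuousAt.2 fun s => (he s).continuousAt
  have hnorm := fun τ (hτ : 0 ≤ τ) => norm_le_dampedDuhamel_of_hasDerivAt hB he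
    (φ := fun s => L * ‖xhat s - x s‖ + ε) (by fun_prop) (fun s => hg _ _) hτ
  intro t ht
  have hgronwall := le_gronwallBound_of_le_dampedDuhamel (K := M * L) (b := M * ε)
    (by fun_prop) (mul_nonneg (by linarith) hL) (fun s _ => le_of_eq (by ring)) hnorm ht
  calc ‖xhat t - x t‖ ≤ gronwallBound (M * ‖xhat 0 - x 0‖) (M * L - α) (M * ε) t := hgronwall
    _ ≤ _ := gronwallBound_le_of_neg (by linarith) (mul_nonneg (by linarith) hε) t
    _ = _ := by rw [neg_sub]; ring

/-- Luenberger-like observer error bound for a system with partially known dynamics: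
if `‖exp(t(A-GC))‖ ≤ M e^{-α t}`, `‖ĝ u - g v‖ ≤ L‖u-v‖ + ε` and `M L < α`, then the
observer error satisfies
`‖x̂ t - x t‖ ≤ M e^{(ML-α)t} ‖x̂ 0 - x 0‖ + M ε / (α - M L)`. -/
theorem luenberger_like_observer_bound
    (n m : ℕ)
    (A : Matrix (Fin n) (Fin n) ℝ) (G : Matrix (Fin n) (Fin m) ℝ)
    (C : Matrix (Fin m) (Fin n) ℝ)
    (M α : ℝ) (hM : 1 ≤ M) (hα : 0 < α)
    (hexp : ∀ t : ℝ, 0 ≤ t →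
      ‖(Matrix.toEuclideanLin (NormedSpace.exp (t • (A - G * C)))).toContinuousLinearMap‖
        ≤ M * Real.exp (-α * t))
    (g ghat : EuclideanSpace ℝ (Fin n) → EuclideanSpace ℝ (Fin n))
    (L ε : ℝ) (hL : 0 ≤ L) (hε : 0 ≤ ε) (hMLα : M * L < α)
    (hg : ∀ u v, ‖ghat u - g v‖ ≤ L * ‖u - v‖ + ε)
    (x xhat : ℝ → EuclideanSpace ℝ (Fin n))
    (hx : ∀ t, HasDerivAt x (Matrix.toEuclideanLin A (x t) + g (x t)) t)
    (hxhat : ∀ t, HasDerivAt xhat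
      (Matrix.toEuclideanLin A (xhat t) + ghat (xhat t)
        + Matrix.toEuclideanLin G
            (Matrix.toEuclideanLin C (x t) - Matrix.toEuclideanLin C (xhat t))) t) :
    ∀ t : ℝ, 0 ≤ t →
      ‖xhat t - x t‖ ≤ M * Real.exp ((M * L - α) * t) * ‖xhat 0 - x 0‖
        + M * ε / (α - M * L) :=
  luenberger_like_observer_bound_general n m A G C M α hM hexp g ghat L ε hL hε hMLα hg x xhat hx
    hxhat
end

section
/- Adjoint gradient identity (finite-dimensional/linear case): let z : [t₀,t_f] → ℝⁿ solve ż = A(θ) z with z(t₀) = z₀, where A : ℝ → ℝ^{n×n} is smooth in the scalar parameter θ, let L : ℝⁿ → ℝ be smooth, and ℓ(θ) = ∫_{t₀}^{t_f} L(z(t;θ)) dt. If p : [t₀,t_f] → ℝⁿ (row vector) solves ṗ = −p A(θ) − ∇L(z(t)) with p(t_f) = 0, then dℓ/dθ = ∫_{t₀}^{t_f} p(t)·(dA/dθ)·z(t) dt. -/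
/-!
For every θ, differentiating `t ↦ p t (z θ t)` with the adjoint equation and integrating from
`t₀` (where `z θ t₀ = z₀`) to `t₁` (where `p t₁ = 0`) gives
`∫ (DL(z θ₀ t) (z θ t) - p t ((A θ - A θ₀) (z θ t))) dt = p t₀ z₀`. Hence, up to the
constant `p t₀ z₀`, the loss is the integral of
`L (z θ t) - DL(z θ₀ t) (z θ t) + p t ((A θ - A θ₀) (z θ t))`, whose θ-derivative at θ₀ is
`p t (A' (z θ₀ t))`: the two terms carrying `∂z/∂θ` cancel. Differentiating under the integral
sign only needs `z θ t - z θ₀ t = O(θ - θ₀)` uniformly in `t`, which is Grönwall's inequality.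
Such bounds, uniform in `t ∈ K`, are stated as `=O[𝓝 θ₀ ×ˢ 𝓟 K]`.
-/

open scoped Matrix
open Filter Topology Set MeasureTheory Asymptotics

variable {E F : Type*} [NormedAddCommGroup E] [NormedSpace ℝ E]
  [NormedAddCommGroup F] [NormedSpace ℝ F]

theorem Asymptotics.IsBigO.clm_apply {α : Type*} {l : Filter α} {g : α → E →L[ℝ] F}
    {u : α → E} {k₁ k₂ : α → ℝ} (hg : g =O[l] k₁) (hu : u =O[l] k₂) :
    (fun x => g x (u x)) =O[l] fun x => k₁ x * k₂ x :=
  isBoundedBilinearMap_apply.isBigO_comp.trans (hg.norm_left.mul hu.norm_left)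

section UniformInParameter

variable {X Y : Type*} [TopologicalSpace X] [WeaklyLocallyCompactSpace X] [TopologicalSpace Y]
  {K : Set Y}

theorem Continuous.isBigO_one_nhds_prod_principal {G : Type*} [SeminormedAddCommGroup G]
    {f : X × Y → G} (hf : Continuous f) (hK : IsCompact K) (x₀ : X) :
    f =O[𝓝 x₀ ×ˢ 𝓟 K] fun _ => (1 : ℝ) := by
  obtain ⟨N, hN, hNx₀⟩ := exists_compact_mem_nhds x₀
  obtain ⟨C, hC⟩ := (hN.prod hK).exists_bound_of_continuousOn hf.continuousOn
  refine .of_bound C (mem_of_superset (prod_mem_prod hNx₀ (mem_principal_self K)) fun q hq => ?_)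
  simpa using hC q hq

theorem ContDiff.isBigO_comp_sub_nhds_prod_principal {L : E → F} (hL : ContDiff ℝ 1 L)
    {u : X × Y → E} (hu : Continuous u) (hK : IsCompact K) (x₀ : X) :
    (fun q => L (u q) - L (u (x₀, q.2))) =O[𝓝 x₀ ×ˢ 𝓟 K]
      fun q => u q - u (x₀, q.2) := by
  obtain ⟨N, hN, hNx₀⟩ := exists_compact_mem_nhds x₀
  have hNK : IsCompact (u '' N ×ˢ K) := (hN.prod hK).image hu
  obtain ⟨C, hC⟩ :=
    hL.locallyLipschitz.locallyLipschitzOn.exists_lipschitzOnWith_of_compact hNK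
  refine .of_bound C (mem_of_superset (prod_mem_prod hNx₀ (mem_principal_self K)) fun q hq => ?_)
  exact hC.norm_sub_le (mem_image_of_mem u hq)
    (mem_image_of_mem u ⟨mem_of_mem_nhds hNx₀, hq.2⟩)

end UniformInParameter

theorem gronwallBound_zero_eq_mul (K ε x : ℝ) :
    gronwallBound 0 K ε x = ε * gronwallBound 0 K 1 x := by
  unfold gronwallBound
  split_ifs <;> ring

theorem isBigO_linearODE_sub {A : ℝ → E →L[ℝ] E} {z : ℝ → ℝ → E} {θ₀ t₀ t₁ : ℝ}
    (hA : (fun θ => A θ - A θ₀) =O[𝓝 θ₀] fun θ => θ - θ₀)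
    (hz : ∀ θ t, HasDerivAt (z θ) (A θ (z θ t)) t)
    (hz_init : ∀ θ, z θ t₀ = z θ₀ t₀)
    (hz_bdd : (fun q : ℝ × ℝ => z q.1 q.2) =O[𝓝 θ₀ ×ˢ 𝓟 (Icc t₀ t₁)]
      fun _ => (1 : ℝ)) :
    (fun q : ℝ × ℝ => z q.1 q.2 - z θ₀ q.2) =O[𝓝 θ₀ ×ˢ 𝓟 (Icc t₀ t₁)]
      fun q => q.1 - θ₀ := by
  have hzc : ∀ θ, Continuous (z θ) := fun θ =>
    continuous_iff_continuousAt.2 fun t => (hz θ t).continuousAt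
  obtain ⟨c, hc, hdefect⟩ := ((hA.comp_tendsto tendsto_fst).clm_apply hz_bdd).exists_nonneg
  have hdefect_le := hdefect.bound
  rw [eventually_prod_principal_iff] at hdefect_le
  set G := gronwallBound 0 ‖A θ₀‖₊ 1 (t₁ - t₀)
  refine .of_bound (c * G) ?_
  rw [eventually_prod_principal_iff]
  filter_upwards [hdefect_le] with θ hθ t ht
  -- `z θ` solves `ż = A θ₀ z` up to the defect `(A θ - A θ₀) (z θ t)`, while `z θ₀` solves it.
  have key := dist_le_of_approx_trajectories_ODE (v := fun _ x => A θ₀ x)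
    (fun _ => (A θ₀).lipschitz) (hzc θ).continuousOn
    (fun t _ => (hz θ t).hasDerivWithinAt) (εf := c * |θ - θ₀|) (fun t ht' => ?_)
    (hzc θ₀).continuousOn (fun t _ => (hz θ₀ t).hasDerivWithinAt) (εg := 0)
    (fun t _ => by simp) (δ := 0) (by simp [hz_init θ]) t ht
  · rw [dist_eq_norm, add_zero, gronwallBound_zero_eq_mul] at key
    calc ‖z θ t - z θ₀ t‖
        ≤ c * |θ - θ₀| * gronwallBound 0 ‖A θ₀‖₊ 1 (t - t₀) := key
      _ ≤ c * |θ - θ₀| * G := by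
        gcongr
        exact gronwallBound_mono le_rfl zero_le_one (by positivity) (by linarith [ht.2])
      _ = c * G * ‖θ - θ₀‖ := by rw [Real.norm_eq_abs]; ring
  · simpa [dist_eq_norm] using hθ t (Ico_subset_Icc_self ht')

theorem hasDerivAt_intervalIntegral_of_isBigO [CompleteSpace E] {F : ℝ → ℝ → E}
    {F' : ℝ → E} {θ₀ a b : ℝ} (hab : a ≤ b) (hF : ∀ θ, Continuous (F θ)) (hF' : Continuous F')
    (hF_lip : (fun q : ℝ × ℝ => F q.1 q.2 - F θ₀ q.2) =O[𝓝 θ₀ ×ˢ 𝓟 (Icc a b)]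
      fun q => q.1 - θ₀)
    (hF_deriv : ∀ t ∈ Icc a b, HasDerivAt (fun θ => F θ t) (F' t) θ₀) :
    HasDerivAt (fun θ => ∫ t in a..b, F θ t) (∫ t in a..b, F' t) θ₀ := by
  obtain ⟨C, hC⟩ := hF_lip.bound
  rw [eventually_prod_principal_iff] at hC
  simp only [intervalIntegral.integral_of_le hab]
  obtain ⟨hint, hderiv⟩ := hasFDerivAt_integral_of_dominated_loc_of_lip'
    (μ := volume.restrict (Ioc a b)) (bound := fun _ => C)
    (F' := fun t => (1 : ℝ →L[ℝ] ℝ).smulRight (F' t)) hC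
    (fun θ _ => (hF θ).aestronglyMeasurable)
    ((hF θ₀).integrableOn_Icc.mono_set Ioc_subset_Icc_self)
    (Continuous.aestronglyMeasurable (by fun_prop))
    ((ae_restrict_iff' measurableSet_Ioc).2 (.of_forall fun t ht θ hθ =>
      hθ t (Ioc_subset_Icc_self ht)))
    (integrable_const C)
    ((ae_restrict_iff' measurableSet_Ioc).2 (.of_forall fun t ht =>
      (hF_deriv t (Ioc_subset_Icc_self ht)).hasFDerivAt))
  simpa [ContinuousLinearMap.integral_apply hint] using hderiv.hasDerivAt

theorem integral_adjoint_pairing_eq {A B : E →L[ℝ] E} {z : ℝ → E} {z₀ : E} {t₀ t₁ : ℝ}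
    (hz : ∀ t, HasDerivAt z (B (z t)) t) (hz_init : z t₀ = z₀)
    {g : ℝ → StrongDual ℝ E} (hg : Continuous g) {p : ℝ → StrongDual ℝ E}
    (hp : ∀ t, HasDerivAt p (-(p t).comp A - g t) t) (hp_final : p t₁ = 0) :
    ∫ t in t₀..t₁, (g t (z t) - p t ((B - A) (z t))) = p t₀ z₀ := by
  have hzc : Continuous z := continuous_iff_continuousAt.2 fun t => (hz t).continuousAt
  have hpc : Continuous p := continuous_iff_continuousAt.2 fun t => (hp t).continuousAt
  have hderiv : ∀ t, HasDerivAt (fun t => -p t (z t)) (g t (z t) - p t ((B - A) (z t))) t :=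
    fun t => by
    refine ((hp t).clm_apply (hz t)).neg.congr_deriv ?_
    simp only [sub_apply, neg_apply, ContinuousLinearMap.comp_apply, map_sub]
    ring
  rw [intervalIntegral.integral_eq_sub_of_hasDerivAt (fun t _ => hderiv t)
    (Continuous.intervalIntegrable (by fun_prop) _ _), hp_final, hz_init]
  simp

section Adjoint

variable {A : ℝ → E →L[ℝ] E} {z : ℝ → ℝ → E} {L : E → ℝ} {p : ℝ → StrongDual ℝ E} {θ₀ : ℝ}

noncomputable def adjointIntegrand (A : ℝ → E →L[ℝ] E) (z : ℝ → ℝ → E) (L : E → ℝ)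
    (p : ℝ → StrongDual ℝ E) (θ₀ θ t : ℝ) : ℝ :=
  L (z θ t) - fderiv ℝ L (z θ₀ t) (z θ t) + p t ((A θ - A θ₀) (z θ t))

theorem continuous_adjointIntegrand {θ : ℝ} (hz : ∀ θ, Continuous (z θ)) (hL : ContDiff ℝ 1 L)
    (hp : Continuous p) : Continuous (adjointIntegrand A z L p θ₀ θ) := by
  have hDL : Continuous (fderiv ℝ L) := hL.continuous_fderiv one_ne_zero
  have hLc : Continuous L := hL.continuous
  have hzθ := hz θ
  have hzθ₀ := hz θ₀
  unfold adjointIntegrand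
  fun_prop

theorem integral_eq_integral_adjointIntegrand_add {z₀ : E} {θ t₀ t₁ : ℝ}
    (hz : ∀ θ t, HasDerivAt (z θ) (A θ (z θ t)) t) (hz_init : z θ t₀ = z₀)
    (hL : ContDiff ℝ 1 L) (hp : ∀ t, HasDerivAt p (-(p t).comp (A θ₀) - fderiv ℝ L (z θ₀ t)) t)
    (hp_final : p t₁ = 0) :
    ∫ t in t₀..t₁, L (z θ t) = (∫ t in t₀..t₁, adjointIntegrand A z L p θ₀ θ t) + p t₀ z₀ := by
  have hzc : ∀ θ, Continuous (z θ) := fun θ =>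
    continuous_iff_continuousAt.2 fun t => (hz θ t).continuousAt
  have hpc : Continuous p := continuous_iff_continuousAt.2 fun t => (hp t).continuousAt
  have hpairing := integral_adjoint_pairing_eq (hz θ) hz_init
    ((hL.continuous_fderiv one_ne_zero).comp (hzc θ₀)) hp hp_final
  rw [← hpairing, ← intervalIntegral.integral_add
    ((continuous_adjointIntegrand hzc hL hpc).intervalIntegrable _ _)
    (Continuous.intervalIntegrable (by fun_prop) _ _)]
  congr 1
  ext t
  simp only [adjointIntegrand, Function.comp_apply]
  ring

theorem isBigO_adjointIntegrand_sub {A' : E →L[ℝ] E} {z₀ : E} {t₀ t₁ : ℝ}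
    (hA : HasDerivAt A A' θ₀) (hz : ∀ θ t, HasDerivAt (z θ) (A θ (z θ t)) t)
    (hz_init : ∀ θ, z θ t₀ = z₀) (hz_cont : Continuous fun q : ℝ × ℝ => z q.1 q.2)
    (hL : ContDiff ℝ 1 L) (hp : Continuous p) :
    (fun q : ℝ × ℝ => adjointIntegrand A z L p θ₀ q.1 q.2 - adjointIntegrand A z L p θ₀ θ₀ q.2)
      =O[𝓝 θ₀ ×ˢ 𝓟 (Icc t₀ t₁)] fun q => q.1 - θ₀ := by
  have hS : IsCompact (Icc t₀ t₁) := isCompact_Icc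
  have hz_bdd := hz_cont.isBigO_one_nhds_prod_principal hS θ₀
  have hΔ := isBigO_linearODE_sub hA.isBigO_sub hz
    (fun θ => (hz_init θ).trans (hz_init θ₀).symm) hz_bdd
  have hL_lip := (hL.isBigO_comp_sub_nhds_prod_principal hz_cont hS θ₀).trans hΔ
  have hzθ₀ : Continuous (z θ₀) := continuous_iff_continuousAt.2 fun t => (hz θ₀ t).continuousAt
  have hDL_lin := (((hL.continuous_fderiv one_ne_zero).comp hzθ₀).comp continuous_snd)
    |>.isBigO_one_nhds_prod_principal hS θ₀ |>.clm_apply hΔ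
  have hp_lin := (hp.comp continuous_snd).isBigO_one_nhds_prod_principal hS θ₀
    |>.clm_apply ((hA.isBigO_sub.comp_tendsto tendsto_fst).clm_apply hz_bdd)
  refine ((hL_lip.sub (hDL_lin.congr_right fun q => one_mul _)).add
    (hp_lin.congr_right fun q => by simp)).congr_left fun q => ?_
  simp only [adjointIntegrand, Function.comp_apply, sub_self, zero_apply, map_sub, map_zero]
  ring

theorem hasDerivAt_adjointIntegrand {A' : E →L[ℝ] E} {t : ℝ} (hA : HasDerivAt A A' θ₀)
    (hz : DifferentiableAt ℝ (fun θ => z θ t) θ₀) (hL : ContDiff ℝ 1 L) :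
    HasDerivAt (fun θ => adjointIntegrand A z L p θ₀ θ t) (p t (A' (z θ₀ t))) θ₀ := by
  have hδ := hz.hasDerivAt
  have hd1 := (hL.differentiable one_ne_zero (z θ₀ t)).hasFDerivAt.comp_hasDerivAt θ₀ hδ
  have hd2 := (fderiv ℝ L (z θ₀ t)).hasFDerivAt.comp_hasDerivAt θ₀ hδ
  have hd3 := (p t).hasFDerivAt.comp_hasDerivAt θ₀ ((hA.sub_const (A θ₀)).clm_apply hδ)
  exact ((hd1.sub hd2).add hd3).congr_deriv (by simp)

theorem hasDerivAt_integral_of_adjoint {A' : E →L[ℝ] E} {t₀ t₁ : ℝ} {z₀ : E}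
    (ht : t₀ ≤ t₁) (hA : HasDerivAt A A' θ₀)
    (hz : ∀ θ t, HasDerivAt (z θ) (A θ (z θ t)) t) (hz_init : ∀ θ, z θ t₀ = z₀)
    (hz_cont : Continuous fun q : ℝ × ℝ => z q.1 q.2)
    (hz_diff : ∀ t, DifferentiableAt ℝ (fun θ => z θ t) θ₀) (hL : ContDiff ℝ 1 L)
    (hp : ∀ t, HasDerivAt p (-(p t).comp (A θ₀) - fderiv ℝ L (z θ₀ t)) t)
    (hp_final : p t₁ = 0) :
    HasDerivAt (fun θ => ∫ t in t₀..t₁, L (z θ t)) (∫ t in t₀..t₁, p t (A' (z θ₀ t))) θ₀ := by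
  have hzc : ∀ θ, Continuous (z θ) := fun θ =>
    hz_cont.comp (continuous_const.prodMk continuous_id)
  have hpc : Continuous p := continuous_iff_continuousAt.2 fun t => (hp t).continuousAt
  simp only [integral_eq_integral_adjointIntegrand_add hz (hz_init _) hL hp hp_final]
  exact (hasDerivAt_intervalIntegral_of_isBigO ht
    (fun θ => continuous_adjointIntegrand hzc hL hpc) (by fun_prop)
    (isBigO_adjointIntegrand_sub hA hz hz_init hz_cont hL hpc)
    fun t _ => hasDerivAt_adjointIntegrand hA (hz_diff t) hL).add_const _

end Adjoint

theorem HasDerivAt.linearMap_toContinuousLinearMap {G H : Type*} [NormedAddCommGroup G]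
    [NormedSpace ℝ G] [FiniteDimensional ℝ G] [NormedAddCommGroup H] [NormedSpace ℝ H]
    [FiniteDimensional ℝ E] (f : G →ₗ[ℝ] E →ₗ[ℝ] H) {c : ℝ → G} {c' : G} {x : ℝ}
    (hc : HasDerivAt c c' x) :
    HasDerivAt (fun y => (f (c y)).toContinuousLinearMap) (f c').toContinuousLinearMap x :=
  (LinearMap.toContinuousLinearMap
      ((LinearMap.toContinuousLinearMap : (E →ₗ[ℝ] H) ≃ₗ[ℝ] _).toLinearMap ∘ₗ f)).hasFDerivAt
    |>.comp_hasDerivAt x hc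

open scoped Matrix.Norms.Elementwise in
theorem Matrix.hasDerivAt_toLin' {m n : Type*} [Fintype m] [Fintype n] [DecidableEq n]
    {A : ℝ → Matrix m n ℝ} {A' : Matrix m n ℝ} {θ₀ : ℝ}
    (hA : ∀ i j, HasDerivAt (fun θ => A θ i j) (A' i j) θ₀) :
    HasDerivAt (fun θ => (Matrix.toLin' (A θ)).toContinuousLinearMap)
      (Matrix.toLin' A').toContinuousLinearMap θ₀ :=
  (hasDerivAt_pi.2 fun i => hasDerivAt_pi.2 (hA i)).linearMap_toContinuousLinearMap
    Matrix.toLin'.toLinearMap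

theorem HasDerivAt.dotProductBilin_toContinuousLinearMap {m : Type*} [Fintype m]
    [DecidableEq m] {p : ℝ → m → ℝ} {M : Matrix m m ℝ} {q : m → ℝ} {t : ℝ}
    (hp : HasDerivAt p (-(p t ᵥ* M) - q) t) :
    HasDerivAt (fun t => (dotProductBilin ℝ ℝ (p t)).toContinuousLinearMap)
      (-(dotProductBilin ℝ ℝ (p t)).toContinuousLinearMap.comp
        (Matrix.toLin' M).toContinuousLinearMap - (dotProductBilin ℝ ℝ q).toContinuousLinearMap)
      t := by
  have h_eq : (dotProductBilin ℝ ℝ (-(p t ᵥ* M) - q)).toContinuousLinearMap =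
      -(dotProductBilin ℝ ℝ (p t)).toContinuousLinearMap.comp
        (Matrix.toLin' M).toContinuousLinearMap -
        (dotProductBilin ℝ ℝ q).toContinuousLinearMap := by
    ext u
    simp only [LinearMap.coe_toContinuousLinearMap', dotProductBilin_apply_apply, sub_apply,
      neg_apply, ContinuousLinearMap.comp_apply, Matrix.toLin'_apply, Matrix.dotProduct_mulVec,
      sub_dotProduct, neg_dotProduct]
  rw [← h_eq]
  exact hp.linearMap_toContinuousLinearMap (dotProductBilin ℝ ℝ)

theorem adjoint_gradient_identity_general
    (n : ℕ) (t₀ tf : ℝ) (ht : t₀ ≤ tf)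
    (A : ℝ → Matrix (Fin n) (Fin n) ℝ) (A' : Matrix (Fin n) (Fin n) ℝ) (θ₀ : ℝ)
    (hA : ∀ i j, HasDerivAt (fun θ => A θ i j) (A' i j) θ₀)
    (z₀ : Fin n → ℝ) (z : ℝ → ℝ → (Fin n → ℝ))
    (hz_ode : ∀ θ t, HasDerivAt (fun s => z θ s) ((A θ).mulVec (z θ t)) t)
    (hz_init : ∀ θ, z θ t₀ = z₀)
    (δz : ℝ → (Fin n → ℝ))
    (hδz : ∀ t, HasDerivAt (fun θ => z θ t) (δz t) θ₀)
    (hz_cont : Continuous fun p : ℝ × ℝ => z p.1 p.2)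
    (L : (Fin n → ℝ) → ℝ) (hL : ContDiff ℝ 1 L)
    (gradL : (Fin n → ℝ) → (Fin n → ℝ))
    (hgrad : ∀ x u, fderiv ℝ L x u = gradL x ⬝ᵥ u)
    (p : ℝ → (Fin n → ℝ))
    (hp_ode : ∀ t, HasDerivAt p (-(Matrix.vecMul (p t) (A θ₀)) - gradL (z θ₀ t)) t)
    (hp_final : p tf = 0) :
    HasDerivAt (fun θ => ∫ t in t₀..tf, L (z θ t))
      (∫ t in t₀..tf, p t ⬝ᵥ A'.mulVec (z θ₀ t)) θ₀ := by
  have hDL : ∀ x, fderiv ℝ L x = (dotProductBilin ℝ ℝ (gradL x)).toContinuousLinearMap :=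
    fun x => ContinuousLinearMap.ext (hgrad x)
  have hp_dual := fun t => (hp_ode t).dotProductBilin_toContinuousLinearMap
  simp only [← hDL] at hp_dual
  simpa only [LinearMap.coe_toContinuousLinearMap', dotProductBilin_apply_apply,
    Matrix.toLin'_apply] using hasDerivAt_integral_of_adjoint ht (Matrix.hasDerivAt_toLin' hA)
      hz_ode hz_init hz_cont (fun t => (hδz t).differentiableAt) hL hp_dual
      (by rw [hp_final, map_zero, map_zero])

/-- Adjoint gradient identity for a linear parameterized vector field `F(z,θ) = A(θ)z`
and loss `ℓ(θ) = ∫ L(z(t;θ)) dt`: if the adjoint `p` solves the backward adjoint ODE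
`ṗ = -p A(θ₀) - ∇L(z)` with `p(t_f) = 0`, then
`dℓ/dθ = ∫ p(t) · (dA/dθ) z(t) dt` at `θ₀`. -/
theorem adjoint_gradient_identity
    (n : ℕ) (t₀ tf : ℝ) (ht : t₀ ≤ tf)
    (A : ℝ → Matrix (Fin n) (Fin n) ℝ) (A' : Matrix (Fin n) (Fin n) ℝ) (θ₀ : ℝ)
    (hA : ∀ i j, HasDerivAt (fun θ => A θ i j) (A' i j) θ₀)
    (z₀ : Fin n → ℝ) (z : ℝ → ℝ → (Fin n → ℝ))
    (hz_ode : ∀ θ t, HasDerivAt (fun s => z θ s) ((A θ).mulVec (z θ t)) t)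
    (hz_init : ∀ θ, z θ t₀ = z₀)
    (δz : ℝ → (Fin n → ℝ)) (hδz_cont : Continuous δz)
    (hδz : ∀ t, HasDerivAt (fun θ => z θ t) (δz t) θ₀)
    (hz_cont : Continuous fun p : ℝ × ℝ => z p.1 p.2)
    (L : (Fin n → ℝ) → ℝ) (hL : ContDiff ℝ 1 L)
    (gradL : (Fin n → ℝ) → (Fin n → ℝ))
    (hgrad : ∀ x u, fderiv ℝ L x u = gradL x ⬝ᵥ u)
    (p : ℝ → (Fin n → ℝ))
    (hp_ode : ∀ t, HasDerivAt p (-(Matrix.vecMul (p t) (A θ₀)) - gradL (z θ₀ t)) t)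
    (hp_final : p tf = 0) :
    HasDerivAt (fun θ => ∫ t in t₀..tf, L (z θ t))
      (∫ t in t₀..tf, p t ⬝ᵥ A'.mulVec (z θ₀ t)) θ₀ :=
  adjoint_gradient_identity_general n t₀ tf ht A A' θ₀ hA z₀ z hz_ode hz_init δz hδz hz_cont L hL
    gradL hgrad p hp_ode hp_final
end
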